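/- arXiv:1101.3200 — 4 statements merged into one kernel-verified Lean document; each statement's English description precedes it below -/
import Mathlib

section
/- A finite invertible automaton A over alphabet X is polynomial (i.e., distinct nontrivial simple directed cycles in A are pairwise disjoint) if and only if the number of directed paths of length n in A avoiding the trivial state is bounded by a polynomial in n. -/
/-- A finite invertible automaton over the alphabet `X`. -/
structure Automaton (X : Type*) where
  S : Type*
  [fin : Fintype S]
  trans : S → X → S
  out : S → X → X
  inv : ∀ s : S, Function.Bijective (out s)

attribute [instance] Automaton.fin

namespace Automaton

variable {X : Type*} (A : Automaton X)

/-- A simple directed cycle in (the Moore diagram of) the automaton `A`, recorded as a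
nonempty list of (state, letter) pairs with pairwise distinct states, consecutive
transitions, and a closing transition. -/
def IsCycle (c : List (A.S × X)) : Prop :=
  c ≠ [] ∧ (c.map Prod.fst).Nodup ∧
    c.Chain' (fun p q => A.trans p.1 p.2 = q.1) ∧
    ∀ h : c ≠ [], A.trans (c.getLast h).1 (c.getLast h).2 = (c.head h).1

/-- The number of directed paths of length `n` in `A` avoiding the state `e`
(paths in the Moore diagram, i.e. recorded together with the letters traversed). -/
noncomputable def pathCount (e : A.S) (n : ℕ) : ℕ :=
  Nat.card {px : (Fin (n + 1) → A.S) × (Fin n → X) //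
    (∀ i, px.1 i ≠ e) ∧ ∀ i : Fin n, A.trans (px.1 i.castSucc) (px.2 i) = px.1 i.succ}

end Automaton

/-!
If distinct nontrivial cycles are disjoint, every state lies on at most one of them, so a step
along a cycle is determined by its source. A step that lies on no nontrivial cycle is never
followed by a return to its source: the closed walk in between would decompose into simple cycles,
one of them through that step. Hence a path is determined by its start and, for each state, the
time and letter of the off-cycle step leaving it (if any), which gives at most
`|S| (n |X| + 1) ^ |S|` paths of length `n`.

Conversely, if two distinct simple cycles meet in a state `s`, rotate both to start at `s`; then
`d₁ ++ d₂` and `d₂ ++ d₁` are distinct closed walks at `s` of the same length, and the `2 ^ k`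
concatenations of `k` of them are distinct paths of length `k (|d₁| + |d₂|)`.
-/

theorem List.exists_eq_append_cons_append_cons_of_not_nodup_map {α β : Type*} (f : α → β)
    {l : List α} (h : ¬(l.map f).Nodup) :
    ∃ l₁ x l₂ y l₃, l = l₁ ++ x :: l₂ ++ y :: l₃ ∧ f x = f y := by
  induction l with
  | nil => simp at h
  | cons a l ih =>
    by_cases hl : (l.map f).Nodup
    · obtain ⟨y, hy, hfy⟩ : ∃ y ∈ l, f y = f a := by
        simpa [List.nodup_cons, hl] using h
      obtain ⟨l₂, l₃, rfl⟩ := List.append_of_mem hy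
      exact ⟨[], a, l₂, y, l₃, rfl, hfy.symm⟩
    · obtain ⟨l₁, x, l₂, y, l₃, rfl, hxy⟩ := ih hl
      exact ⟨a :: l₁, x, l₂, y, l₃, rfl, hxy⟩

theorem List.eq_of_append_comm_of_nodup {α : Type*} {l₁ l₂ : List α} (h : l₁ ++ l₂ = l₂ ++ l₁)
    (h₁ : l₁.Nodup) (h₂ : l₂.Nodup) (hne₁ : l₁ ≠ []) (hne₂ : l₂ ≠ []) : l₁ = l₂ := by
  wlog hle : l₁.length ≤ l₂.length generalizing l₁ l₂
  · exact (this h.symm h₂ h₁ hne₂ hne₁ (by omega)).symm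
  obtain ⟨r, rfl⟩ : ∃ r, l₂ = l₁ ++ r := by
    refine ⟨l₂.drop l₁.length, ?_⟩
    have := congrArg (List.take l₁.length) h
    rw [List.take_left, List.take_append_of_le_length hle] at this
    calc l₂ = l₂.take l₁.length ++ l₂.drop l₁.length := (List.take_append_drop _ _).symm
      _ = _ := by rw [← this]
  by_cases hr : r = []
  · simp [hr]
  -- `l₁ ++ r = r ++ l₁` makes `r` start with the head of `l₁`, which then occurs twice in `l₂`.
  have hcomm : l₁ ++ r = r ++ l₁ := by simpa using h
  obtain ⟨a, l₁, rfl⟩ := List.exists_cons_of_ne_nil hne₁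
  obtain ⟨b, r, rfl⟩ := List.exists_cons_of_ne_nil hr
  obtain rfl : a = b := by simpa using congrArg List.head? hcomm
  simp at h₂

theorem exists_mul_pow_lt_two_pow (C d : ℕ) : ∃ k : ℕ, C * (k + 1) ^ d < 2 ^ k := by
  have hlim := (tendsto_pow_const_div_const_pow_of_one_lt d one_lt_two).comp
    (Filter.tendsto_add_atTop_nat 1)
  obtain ⟨k, hk⟩ := (hlim.eventually (gt_mem_nhds
    (show (0 : ℝ) < 1 / (2 * C + 1) by positivity))).exists
  refine ⟨k, ?_⟩
  simp only [Function.comp_apply, Nat.cast_add, Nat.cast_one] at hk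
  rw [div_lt_div_iff₀ (by positivity) (by positivity), pow_succ] at hk
  have : (C : ℝ) * (k + 1) ^ d < 2 ^ k := by
    nlinarith [pow_pos (show (0 : ℝ) < k + 1 by positivity) d]
  exact_mod_cast this

namespace Automaton

variable {X : Type*}

inductive IsWalk (A : Automaton X) : A.S → List (A.S × X) → A.S → Prop
  | nil (s : A.S) : A.IsWalk s [] s
  | cons {s t : A.S} (x : X) {w : List (A.S × X)} :
      A.IsWalk (A.trans s x) w t → A.IsWalk s ((s, x) :: w) t

variable {A : Automaton X} {s t u : A.S} {p : A.S × X} {w w₁ w₂ : List (A.S × X)}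

theorem isWalk_nil_iff : A.IsWalk s [] t ↔ s = t :=
  ⟨fun h => by cases h; rfl, fun h => h ▸ .nil s⟩

theorem isWalk_cons_iff : A.IsWalk s (p :: w) t ↔ p.1 = s ∧ A.IsWalk (A.trans p.1 p.2) w t := by
  obtain ⟨a, x⟩ := p
  constructor
  · rintro ⟨⟩
    exact ⟨rfl, ‹_›⟩
  · rintro ⟨rfl, h⟩
    exact .cons x h

theorem IsWalk.fst_eq (h : A.IsWalk s (p :: w) t) : p.1 = s :=
  (isWalk_cons_iff.1 h).1

theorem isWalk_append_iff :
    A.IsWalk s (w₁ ++ w₂) u ↔ ∃ t, A.IsWalk s w₁ t ∧ A.IsWalk t w₂ u := by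
  induction w₁ generalizing s with
  | nil => simp [isWalk_nil_iff]
  | cons p w ih =>
    simp only [List.cons_append, isWalk_cons_iff, ih]
    exact ⟨fun ⟨hp, t, h₁, h₂⟩ => ⟨t, ⟨hp, h₁⟩, h₂⟩, fun ⟨t, ⟨hp, h₁⟩, h₂⟩ => ⟨hp, t, h₁, h₂⟩⟩

theorem IsWalk.append (h₁ : A.IsWalk s w₁ t) (h₂ : A.IsWalk t w₂ u) : A.IsWalk s (w₁ ++ w₂) u :=
  isWalk_append_iff.2 ⟨t, h₁, h₂⟩

theorem IsWalk.flatten {ws : List (List (A.S × X))} (h : ∀ w ∈ ws, A.IsWalk s w s) :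
    A.IsWalk s ws.flatten s := by
  induction ws with
  | nil => exact .nil s
  | cons w ws ih =>
    exact (h w List.mem_cons_self).append (ih fun v hv => h v (List.mem_cons_of_mem w hv))

theorem IsWalk.isWalk_segment {q : A.S × X} {w₃ : List (A.S × X)}
    (h : A.IsWalk s (w₁ ++ p :: w₂ ++ q :: w₃) t) : A.IsWalk p.1 (p :: w₂) q.1 := by
  obtain ⟨u, h₁, h₂⟩ := isWalk_append_iff.1 h
  obtain ⟨v, -, h₁⟩ := isWalk_append_iff.1 h₁
  rwa [← h₁.fst_eq, ← h₂.fst_eq] at h₁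

theorem isWalk_cons_iff_isChain : A.IsWalk s (p :: w) t ↔ p.1 = s ∧
    (p :: w).IsChain (fun p q => A.trans p.1 p.2 = q.1) ∧
    A.trans ((p :: w).getLast (List.cons_ne_nil p w)).1
      ((p :: w).getLast (List.cons_ne_nil p w)).2 = t := by
  induction w generalizing p s with
  | nil => simp [isWalk_cons_iff, isWalk_nil_iff]
  | cons q w ih =>
    rw [isWalk_cons_iff, ih, List.isChain_cons_cons, List.getLast_cons_cons]
    tauto

theorem isCycle_iff {c : List (A.S × X)} :
    A.IsCycle c ↔ c ≠ [] ∧ (c.map Prod.fst).Nodup ∧ ∃ s, A.IsWalk s c s := by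
  cases c with
  | nil => simp [IsCycle]
  | cons p w =>
    simp only [IsCycle, isWalk_cons_iff_isChain]
    refine ⟨fun ⟨hne, hnd, hch, hcl⟩ => ⟨hne, hnd, p.1, rfl, hch, hcl hne⟩, ?_⟩
    rintro ⟨hne, hnd, s, rfl, hch, hcl⟩
    exact ⟨hne, hnd, hch, fun _ => hcl⟩

theorem IsCycle.exists_isWalk_rotate {c : List (A.S × X)} (hc : A.IsCycle c)
    (hs : s ∈ c.map Prod.fst) : ∃ m, A.IsWalk s (c.rotate m) s := by
  obtain ⟨-, -, t, ht⟩ := isCycle_iff.1 hc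
  obtain ⟨p, hp, rfl⟩ := List.mem_map.1 hs
  obtain ⟨u, v, rfl⟩ := List.append_of_mem hp
  obtain ⟨r, hu, hv⟩ := isWalk_append_iff.1 ht
  refine ⟨u.length, ?_⟩
  rw [List.rotate_append_length_eq, hv.fst_eq]
  exact hv.append hu

def OnCycleAvoiding (A : Automaton X) (e : A.S) (p : A.S × X) : Prop :=
  ∃ c, A.IsCycle c ∧ e ∉ c.map Prod.fst ∧ p ∈ c

variable {e : A.S}

theorem IsWalk.onCycleAvoiding_of_mem (hw : A.IsWalk s w s) (he : e ∉ w.map Prod.fst)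
    (hp : p ∈ w) : A.OnCycleAvoiding e p := by
  induction hlen : w.length using Nat.strong_induction_on generalizing s w with
  | _ n ih =>
  by_cases hnd : (w.map Prod.fst).Nodup
  · exact ⟨w, isCycle_iff.2 ⟨List.ne_nil_of_mem hp, hnd, s, hw⟩, he, hp⟩
  obtain ⟨w₁, x, w₂, y, w₃, rfl, hxy⟩ :=
    List.exists_eq_append_cons_append_cons_of_not_nodup_map Prod.fst hnd
  have hinner : A.IsWalk x.1 (x :: w₂) x.1 := hxy ▸ hw.isWalk_segment
  have houter : A.IsWalk s (w₁ ++ y :: w₃) s := by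
    obtain ⟨t, h₁, h₃⟩ := isWalk_append_iff.1 hw
    obtain ⟨u, h₁, h₂⟩ := isWalk_append_iff.1 h₁
    rw [← h₂.fst_eq, hxy, h₃.fst_eq] at h₁
    exact h₁.append h₃
  have hlt₁ : (x :: w₂).length < n := by simp [← hlen]; omega
  have hlt₂ : (w₁ ++ y :: w₃).length < n := by simp [← hlen]
  have hp' : p ∈ x :: w₂ ∨ p ∈ w₁ ++ y :: w₃ := by
    simp only [List.mem_append, List.mem_cons] at hp ⊢
    tauto
  simp only [List.map_append, List.map_cons, List.mem_append, List.mem_cons, not_or] at he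
  rcases hp' with hp | hp
  · exact ih _ hlt₁ hinner (by simp [*]) hp rfl
  · exact ih _ hlt₂ houter (by simp [*]) hp rfl

theorem IsWalk.fst_notMem_of_not_onCycleAvoiding (hw : A.IsWalk s (w₁ ++ p :: w₂) t)
    (he : e ∉ (w₁ ++ p :: w₂).map Prod.fst) (hp : ¬A.OnCycleAvoiding e p) :
    p.1 ∉ w₂.map Prod.fst := by
  intro hmem
  obtain ⟨q, hq, hqp⟩ := List.mem_map.1 hmem
  obtain ⟨v₁, v₂, rfl⟩ := List.append_of_mem hq
  rw [← List.cons_append, ← List.append_assoc] at hw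
  have hloop : A.IsWalk p.1 (p :: v₁) p.1 := hqp ▸ hw.isWalk_segment
  exact hp (hloop.onCycleAvoiding_of_mem (fun h => he (by simp_all)) List.mem_cons_self)

theorem isWalk_ofFn {n : ℕ} (f : Fin (n + 1) → A.S) (g : Fin n → X)
    (h : ∀ i, A.trans (f i.castSucc) (g i) = f i.succ) :
    A.IsWalk (f 0) (List.ofFn fun i => (f i.castSucc, g i)) (f (Fin.last n)) := by
  induction n with
  | zero => exact .nil _
  | succ n ih =>
    rw [List.ofFn_succ]
    refine .cons (g 0) ?_
    convert ih (fun i => f i.succ) (fun i => g i.succ)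
      (fun i => by rw [Fin.succ_castSucc]; exact h i.succ) using 2
    · exact h 0
    · simp only [Fin.succ_castSucc]
    · exact (Fin.succ_last n).symm

-- `A.pathCount e n` is `Nat.card (A.AvoidingPath e n)` by definition.
variable (A e) in
abbrev AvoidingPath (n : ℕ) :=
  {px : (Fin (n + 1) → A.S) × (Fin n → X) //
    (∀ i, px.1 i ≠ e) ∧ ∀ i : Fin n, A.trans (px.1 i.castSucc) (px.2 i) = px.1 i.succ}

namespace AvoidingPath

variable {n : ℕ}

def steps (p : A.AvoidingPath e n) : List (A.S × X) :=
  List.ofFn fun i => (p.1.1 i.castSucc, p.1.2 i)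

theorem isWalk_steps (p : A.AvoidingPath e n) :
    A.IsWalk (p.1.1 0) p.steps (p.1.1 (Fin.last n)) :=
  isWalk_ofFn _ _ p.2.2

theorem notMem_steps (p : A.AvoidingPath e n) : e ∉ p.steps.map Prod.fst := by
  simp only [steps, List.map_ofFn, List.mem_ofFn]
  rintro ⟨i, hi⟩
  exact p.2.1 _ hi

theorem fst_ne_of_lt_of_not_onCycleAvoiding (p : A.AvoidingPath e n) {i j : Fin n} (hij : i < j)
    (hi : ¬A.OnCycleAvoiding e (p.1.1 i.castSucc, p.1.2 i)) :
    p.1.1 j.castSucc ≠ p.1.1 i.castSucc := by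
  intro hji
  have hlt : (i : ℕ) < j := hij
  have hlen : p.steps.length = n := List.length_ofFn
  have hw := p.isWalk_steps
  have he := p.notMem_steps
  rw [← List.take_append_drop i p.steps, ← List.getElem_cons_drop (by omega)] at hw he
  refine hw.fst_notMem_of_not_onCycleAvoiding he (by simpa [steps] using hi)
    (List.mem_map.2 ⟨p.steps[j.1], ?_, by simp [steps, hji]⟩)
  exact List.mem_drop_iff_getElem.2 ⟨j - (i + 1), by omega, by congr 1; omega⟩

theorem eq_of_not_onCycleAvoiding (p : A.AvoidingPath e n) {i j : Fin n}
    (hij : p.1.1 i.castSucc = p.1.1 j.castSucc)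
    (hi : ¬A.OnCycleAvoiding e (p.1.1 i.castSucc, p.1.2 i))
    (hj : ¬A.OnCycleAvoiding e (p.1.1 j.castSucc, p.1.2 j)) : i = j := by
  rcases lt_trichotomy i j with h | h | h
  · exact absurd hij.symm (p.fst_ne_of_lt_of_not_onCycleAvoiding h hi)
  · exact h
  · exact absurd hij (p.fst_ne_of_lt_of_not_onCycleAvoiding h hj)

-- By `eq_of_not_onCycleAvoiding` there is at most one such step, so `p.exitStep` records all
-- steps of `p` that lie on no cycle avoiding `e`.
open Classical in
noncomputable def exitStep (p : A.AvoidingPath e n) (s : A.S) : Option (Fin n × X) :=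
  if h : ∃ i, p.1.1 i.castSucc = s ∧ ¬A.OnCycleAvoiding e (s, p.1.2 i) then
    some (h.choose, p.1.2 h.choose)
  else none

theorem exitStep_eq_some (p : A.AvoidingPath e n) {i : Fin n}
    (hi : ¬A.OnCycleAvoiding e (p.1.1 i.castSucc, p.1.2 i)) :
    p.exitStep (p.1.1 i.castSucc) = some (i, p.1.2 i) := by
  have h : ∃ j, p.1.1 j.castSucc = p.1.1 i.castSucc ∧
      ¬A.OnCycleAvoiding e (p.1.1 i.castSucc, p.1.2 j) := ⟨i, rfl, hi⟩
  obtain ⟨hj, hj'⟩ := h.choose_spec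
  rw [exitStep, dif_pos h, p.eq_of_not_onCycleAvoiding hj (by rwa [hj]) hi]

theorem snd_eq_of_exitStep_eq_some (p : A.AvoidingPath e n) {s : A.S} {i : Fin n} {x : X}
    (h : p.exitStep s = some (i, x)) : p.1.2 i = x := by
  unfold exitStep at h
  split_ifs at h
  cases h
  rfl

theorem snd_eq_of_exitStep_eq {p q : A.AvoidingPath e n} (h : p.exitStep = q.exitStep)
    {i : Fin n} (hpq : p.1.1 i.castSucc = q.1.1 i.castSucc)
    (hp : ¬A.OnCycleAvoiding e (p.1.1 i.castSucc, p.1.2 i)) : p.1.2 i = q.1.2 i := by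
  have := p.exitStep_eq_some hp
  rw [h, hpq] at this
  exact (q.snd_eq_of_exitStep_eq_some this).symm

theorem ext_of_snd_eq {p q : A.AvoidingPath e n} (h₀ : p.1.1 0 = q.1.1 0)
    (h : ∀ i, p.1.1 i.castSucc = q.1.1 i.castSucc → p.1.2 i = q.1.2 i) : p = q := by
  have hf : ∀ i, p.1.1 i = q.1.1 i :=
    Fin.induction h₀ fun i hi => by rw [← p.2.2 i, ← q.2.2 i, hi, h i hi]
  exact Subtype.ext (Prod.ext (funext hf) (funext fun i => h i (hf _)))

end AvoidingPath

variable (A e) in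
def IsPolynomial : Prop :=
  ∀ c₁ c₂ : List (A.S × X), A.IsCycle c₁ → A.IsCycle c₂ →
    e ∉ c₁.map Prod.fst → e ∉ c₂.map Prod.fst →
    (∃ s, s ∈ c₁.map Prod.fst ∧ s ∈ c₂.map Prod.fst) →
    ∃ m : ℕ, c₂ = c₁.rotate m

namespace IsPolynomial

theorem snd_eq_of_onCycleAvoiding (H : A.IsPolynomial e) {x y : X}
    (hx : A.OnCycleAvoiding e (s, x)) (hy : A.OnCycleAvoiding e (s, y)) : x = y := by
  obtain ⟨c₁, hc₁, he₁, hx⟩ := hx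
  obtain ⟨c₂, hc₂, he₂, hy⟩ := hy
  obtain ⟨m, rfl⟩ := H c₁ c₂ hc₁ hc₂ he₁ he₂
    ⟨s, List.mem_map_of_mem (f := Prod.fst) hx, List.mem_map_of_mem (f := Prod.fst) hy⟩
  exact congrArg Prod.snd (List.inj_on_of_nodup_map hc₁.2.1 hx (List.mem_rotate.1 hy) rfl)

theorem pathCount_le [Fintype X] (H : A.IsPolynomial e) (n : ℕ) :
    A.pathCount e n ≤ Fintype.card A.S * (Fintype.card X + 1) ^ Fintype.card A.S *
      (n + 1) ^ Fintype.card A.S := by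
  classical
  let encode (p : A.AvoidingPath e n) : A.S × (A.S → Option (Fin n × X)) :=
    (p.1.1 0, p.exitStep)
  have hinj : Function.Injective encode := by
    intro p q hpq
    simp only [encode, Prod.mk.injEq] at hpq
    refine AvoidingPath.ext_of_snd_eq hpq.1 fun i hi => ?_
    by_cases hp : A.OnCycleAvoiding e (p.1.1 i.castSucc, p.1.2 i)
    · by_cases hq : A.OnCycleAvoiding e (q.1.1 i.castSucc, q.1.2 i)
      · exact H.snd_eq_of_onCycleAvoiding hp (hi ▸ hq)
      · exact (AvoidingPath.snd_eq_of_exitStep_eq hpq.2.symm hi.symm hq).symm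
    · exact AvoidingPath.snd_eq_of_exitStep_eq hpq.2 hi hp
  calc A.pathCount e n ≤ Nat.card (A.S × (A.S → Option (Fin n × X))) :=
        Nat.card_le_card_of_injective encode hinj
    _ = Fintype.card A.S * (n * Fintype.card X + 1) ^ Fintype.card A.S := by
        rw [Nat.card_eq_fintype_card]
        simp
    _ ≤ Fintype.card A.S * ((Fintype.card X + 1) * (n + 1)) ^ Fintype.card A.S := by
        gcongr
        nlinarith
    _ = _ := by rw [mul_pow, mul_assoc]

end IsPolynomial

theorem IsWalk.map_fst_append (h : A.IsWalk s w t) :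
    w.map Prod.fst ++ [t] = s :: w.map fun p => A.trans p.1 p.2 := by
  induction h with
  | nil => rfl
  | cons x _ ih => simp [ih]

def IsWalk.toAvoidingPath (hw : A.IsWalk s w t) (he : e ∉ w.map Prod.fst) (ht : t ≠ e) {n : ℕ}
    (hn : w.length = n) : A.AvoidingPath e n :=
  ⟨(fun i => (w.map Prod.fst ++ [t])[i.1]'(by simp; omega),
    fun i => (w.map Prod.snd)[i.1]'(by simp; omega)), fun i hi => by
      have := List.getElem_mem (l := w.map Prod.fst ++ [t]) (n := i.1) (by simp; omega)
      dsimp only at hi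
      rw [hi, List.mem_append, List.mem_singleton] at this
      exact this.elim he ht.symm, fun i => by
      have := List.getElem_of_eq hw.map_fst_append (i := i.1 + 1) (by simp; omega)
      simp_all [List.getElem_append_left]⟩

theorem IsWalk.toAvoidingPath_inj {w₁ w₂ : List (A.S × X)} (h₁ : A.IsWalk s w₁ t)
    (h₂ : A.IsWalk s w₂ t) {he₁ : e ∉ w₁.map Prod.fst} {he₂ : e ∉ w₂.map Prod.fst} {ht : t ≠ e}
    {n : ℕ} {hn₁ : w₁.length = n} {hn₂ : w₂.length = n}
    (h : h₁.toAvoidingPath he₁ ht hn₁ = h₂.toAvoidingPath he₂ ht hn₂) : w₁ = w₂ := by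
  apply List.ext_getElem (hn₁.trans hn₂.symm)
  intro i hi₁ hi₂
  have hf := congrFun (congrArg (fun p => p.1.1) h) ⟨i, by omega⟩
  have hg := congrFun (congrArg (fun p => p.1.2) h) ⟨i, by omega⟩
  simp [toAvoidingPath, List.getElem_append_left, hi₁, hi₂] at hf hg
  exact Prod.ext hf hg

theorem two_pow_le_pathCount [Finite X] (hs : s ≠ e) (hw₁ : A.IsWalk s w₁ s)
    (hw₂ : A.IsWalk s w₂ s) (he₁ : e ∉ w₁.map Prod.fst) (he₂ : e ∉ w₂.map Prod.fst)
    (hlen : w₁.length = w₂.length) (hne : w₁ ≠ w₂) (k : ℕ) :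
    2 ^ k ≤ A.pathCount e (k * w₁.length) := by
  let B (b : Bool) : List (A.S × X) := bif b then w₁ else w₂
  have hB (b : Bool) : A.IsWalk s (B b) s ∧ e ∉ (B b).map Prod.fst := by
    cases b <;> simp [B, *]
  have hBlen (b : Bool) : (B b).length = w₁.length := by
    cases b <;> simp [B, hlen]
  have hBinj : Function.Injective B := by
    intro b b' h
    cases b <;> cases b' <;> simp_all [B, eq_comm]
  let word (ε : Fin k → Bool) : List (A.S × X) := (List.ofFn fun j => B (ε j)).flatten
  have hwalk (ε : Fin k → Bool) : A.IsWalk s (word ε) s :=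
    IsWalk.flatten <| by simpa [List.mem_ofFn] using fun j => (hB (ε j)).1
  have havoid (ε : Fin k → Bool) : e ∉ (word ε).map Prod.fst := by
    simpa [word, List.mem_flatten, List.mem_ofFn] using fun j => (hB (ε j)).2
  have hlength (ε : Fin k → Bool) : (word ε).length = k * w₁.length := by
    simp [word, Function.comp_def, hBlen]
  have hinj :
      Function.Injective fun ε => (hwalk ε).toAvoidingPath (havoid ε) hs (hlength ε) := by
    intro ε₁ ε₂ h
    have hword : word ε₁ = word ε₂ := IsWalk.toAvoidingPath_inj _ _ h
    have hblocks := List.eq_iff_flatten_eq.2 ⟨hword, by simp [Function.comp_def, hBlen]⟩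
    rw [List.ofFn_inj] at hblocks
    exact funext fun j => hBinj (congrFun hblocks j)
  calc 2 ^ k = Nat.card (Fin k → Bool) := by simp
    _ ≤ A.pathCount e (k * w₁.length) := Nat.card_le_card_of_injective _ hinj

theorem IsPolynomial.of_pathCount_le [Finite X] {c d : ℕ}
    (h : ∀ n, A.pathCount e n ≤ c * (n + 1) ^ d) : A.IsPolynomial e := by
  intro c₁ c₂ h₁ h₂ he₁ he₂ ⟨s, hs₁, hs₂⟩
  by_contra hrot
  have hs : s ≠ e := fun hse => he₁ (hse ▸ hs₁)
  obtain ⟨m₁, hw₁⟩ := h₁.exists_isWalk_rotate hs₁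
  obtain ⟨m₂, hw₂⟩ := h₂.exists_isWalk_rotate hs₂
  set d₁ := c₁.rotate m₁
  set d₂ := c₂.rotate m₂
  have hne : d₁ ++ d₂ ≠ d₂ ++ d₁ := by
    intro hcomm
    have hd : d₁ = d₂ := List.eq_of_append_comm_of_nodup hcomm
      (List.nodup_rotate.2 h₁.2.1.of_map) (List.nodup_rotate.2 h₂.2.1.of_map)
      (by simpa [d₁] using h₁.1) (by simpa [d₂] using h₂.1)
    obtain ⟨m, hm⟩ := List.IsRotated.trans ⟨m₁, hd⟩ (List.IsRotated.symm ⟨m₂, rfl⟩)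
    exact hrot ⟨m, hm.symm⟩
  have he₁' : e ∉ d₁.map Prod.fst := by rwa [List.map_rotate, List.mem_rotate]
  have he₂' : e ∉ d₂.map Prod.fst := by rwa [List.map_rotate, List.mem_rotate]
  set N := (d₁ ++ d₂).length
  obtain ⟨k, hk⟩ := exists_mul_pow_lt_two_pow (c * (N + 1) ^ d) d
  have hlower := two_pow_le_pathCount hs (hw₁.append hw₂) (hw₂.append hw₁)
    (by simp [he₁', he₂']) (by simp [he₁', he₂']) (by simp [add_comm]) hne k
  have hupper : c * (k * N + 1) ^ d ≤ c * (N + 1) ^ d * (k + 1) ^ d := by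
    rw [mul_assoc, ← mul_pow]
    gcongr
    nlinarith
  exact (hlower.trans ((h _).trans hupper)).not_gt hk

end Automaton

theorem stmt7_general {X : Type*} [Fintype X] (A : Automaton X) (e : A.S) :
    (∀ c₁ c₂ : List (A.S × X), A.IsCycle c₁ → A.IsCycle c₂ →
        e ∉ c₁.map Prod.fst → e ∉ c₂.map Prod.fst →
        (∃ s, s ∈ c₁.map Prod.fst ∧ s ∈ c₂.map Prod.fst) →
        ∃ m : ℕ, c₂ = c₁.rotate m) ↔
      (∃ c d : ℕ, ∀ n, A.pathCount e n ≤ c * (n + 1) ^ d) :=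
  ⟨fun H => ⟨_, _, Automaton.IsPolynomial.pathCount_le H⟩,
    fun ⟨_, _, h⟩ => Automaton.IsPolynomial.of_pathCount_le h⟩

/-- A finite invertible automaton `A` with trivial state `e` is polynomial (distinct
nontrivial simple directed cycles are pairwise disjoint, where cycles are identified up
to rotation) if and only if the number of directed paths of length `n` avoiding the
trivial state is bounded by a polynomial in `n`. -/
theorem stmt7 {X : Type*} [Fintype X] (A : Automaton X) (e : A.S)
    (he_trans : ∀ x, A.trans e x = e) (he_out : ∀ x, A.out e x = x) :
    (∀ c₁ c₂ : List (A.S × X), A.IsCycle c₁ → A.IsCycle c₂ →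
        e ∉ c₁.map Prod.fst → e ∉ c₂.map Prod.fst →
        (∃ s, s ∈ c₁.map Prod.fst ∧ s ∈ c₂.map Prod.fst) →
        ∃ m : ℕ, c₂ = c₁.rotate m) ↔
      (∃ c d : ℕ, ∀ n, A.pathCount e n ≤ c * (n + 1) ^ d) :=
  stmt7_general A e
end

section
/- A group G generated by a finite invertible automaton is contracting if and only if the complete automaton A(G) contains only finitely many simple directed cycles. -/
/-!
A vertex on a simple cycle of the complete automaton is its own restriction along words of every
length, so it lies in any nucleus `N`; the simple cycles are then duplicate-free lists in `N`.
Conversely, every `g` lies in some power `S ^ n`, which is finite and closed under restriction,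
so `g` has finitely many restrictions. A word longer than their number makes the walk of `g`
revisit a state, hence pass through a simple cycle, and `g|_v` is a restriction of one of the
finitely many vertices lying on simple cycles.
-/

open Pointwise Relation

lemma Set.Finite.setOf_nodup_forall_mem {α : Type*} {N : Set α} (hN : N.Finite) :
    {l : List α | l.Nodup ∧ ∀ a ∈ l, a ∈ N}.Finite := by
  classical
  have := hN.fintype
  refine (Set.finite_range fun l : {l : List N // l.Nodup} => l.1.map Subtype.val).subset ?_
  rintro l ⟨hnd, hmem⟩
  exact ⟨⟨l.attachWith (· ∈ N) hmem, .of_map Subtype.val (by simpa using hnd)⟩, by simp⟩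

lemma Set.Finite.pow {M : Type*} [Monoid M] {S : Set M} (hS : S.Finite) (n : ℕ) :
    (S ^ n).Finite := by
  induction n with
  | zero => simp
  | succ n ih => rw [pow_succ]; exact ih.mul hS

namespace Automaton

variable {Q X : Type*} (δ : Q → X → Q)

def Step (a b : Q) : Prop := ∃ x, δ a x = b

def simpleCycles : Set (List Q) :=
  {c | c ≠ [] ∧ c.Nodup ∧ c.IsChain (Step δ) ∧ ∀ h : c ≠ [], Step δ (c.getLast h) (c.head h)}

def reachableStates (q : Q) : Set Q := Set.range fun v : List X => v.foldl δ q

def IsContracting : Prop :=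
  ∃ N : Set Q, N.Finite ∧ ∀ q, ∃ n, ∀ v : List X, n ≤ v.length → v.foldl δ q ∈ N

variable {δ}

lemma reachableStates_subset {A : Set Q} (hA : ∀ a ∈ A, ∀ x, δ a x ∈ A) {q : Q} (hq : q ∈ A) :
    reachableStates δ q ⊆ A := by
  rintro _ ⟨v, rfl⟩
  induction v generalizing q with
  | nil => exact hq
  | cons x v ih => exact ih (hA q hq x)

lemma exists_foldl_eq_of_reflTransGen {a b : Q} (h : ReflTransGen (Step δ) a b) :
    ∃ v : List X, v.foldl δ a = b := by
  induction h using ReflTransGen.head_induction_on with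
  | refl => exact ⟨[], rfl⟩
  | head hstep _ ih =>
    obtain ⟨x, rfl⟩ := hstep
    obtain ⟨v, hv⟩ := ih
    exact ⟨x :: v, hv⟩

lemma exists_foldl_eq_self_of_mem_simpleCycles {c : List Q} (hc : c ∈ simpleCycles δ) {q : Q}
    (hq : q ∈ c) : ∃ w : List X, w ≠ [] ∧ w.foldl δ q = q := by
  obtain ⟨hne, -, hchain, hclose⟩ := hc
  have hhead : ReflTransGen (Step δ) (c.head hne) q :=
    hchain.induction (ReflTransGen (Step δ) (c.head hne) ·) c (fun _ _ h₁ h₂ => h₂.tail h₁)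
      (fun _ => .refl) q hq
  have hlast : ReflTransGen (Step δ) q (c.getLast hne) :=
    hchain.backwards_induction (ReflTransGen (Step δ) · (c.getLast hne)) c
      (fun _ _ h₁ h₂ => h₂.head h₁) (fun _ => .refl) q hq
  obtain ⟨u, hu⟩ := exists_foldl_eq_of_reflTransGen hlast
  obtain ⟨x, hx⟩ := hclose hne
  obtain ⟨v, hv⟩ := exists_foldl_eq_of_reflTransGen hhead
  exact ⟨u ++ x :: v, by simp, by simp [hu, hx, hv]⟩

lemma foldl_flatten_replicate_of_foldl_eq_self {q : Q} {w : List X} (hw : w.foldl δ q = q)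
    (n : ℕ) : (List.replicate n w).flatten.foldl δ q = q := by
  induction n with
  | zero => rfl
  | succ n ih => rw [List.replicate_succ, List.flatten_cons, List.foldl_append, hw, ih]

theorem finite_simpleCycles_of_isContracting (h : IsContracting δ) : (simpleCycles δ).Finite := by
  obtain ⟨N, hN, hcontr⟩ := h
  refine hN.setOf_nodup_forall_mem.subset fun c hc => ⟨hc.2.1, fun q hq => ?_⟩
  obtain ⟨w, hw, hwq⟩ := exists_foldl_eq_self_of_mem_simpleCycles hc hq
  obtain ⟨n, hn⟩ := hcontr q
  have hlen : n ≤ (List.replicate n w).flatten.length := by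
    simpa [List.length_flatten] using Nat.le_mul_of_pos_right n (List.length_pos_iff.2 hw)
  simpa [foldl_flatten_replicate_of_foldl_eq_self hwq] using hn _ hlen

lemma map_range_mem_simpleCycles {f : ℕ → Q} {n : ℕ} (hstep : ∀ i ≤ n, Step δ (f i) (f (i + 1)))
    (hclose : f (n + 1) = f 0) (hinj : Set.InjOn f (Set.Iic n)) :
    (List.range (n + 1)).map f ∈ simpleCycles δ := by
  refine ⟨by simp, ?_, ?_, fun _ => ?_⟩
  · refine List.nodup_range.map_on fun i hi j hj hij => hinj ?_ ?_ hij <;> simp_all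
  · rw [List.isChain_map, List.isChain_range_succ]
    exact fun m hm => hstep m hm.le
  · simpa [List.getLast_map, hclose] using hstep n le_rfl

lemma foldl_take_succ {q : Q} {v : List X} {i : ℕ} (hi : i < v.length) :
    (v.take (i + 1)).foldl δ q = δ ((v.take i).foldl δ q) v[i] := by
  rw [List.take_succ_eq_append_getElem hi, List.foldl_concat]

lemma exists_lt_foldl_take_eq {q : Q} (hq : (reachableStates δ q).Finite) {v : List X}
    (hv : hq.toFinset.card ≤ v.length) :
    ∃ a b, a < b ∧ b ≤ v.length ∧ (v.take a).foldl δ q = (v.take b).foldl δ q := by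
  obtain ⟨a, ha, b, hb, hne, heq⟩ := Finset.exists_ne_map_eq_of_card_lt_of_maps_to
    (s := Finset.range (v.length + 1)) (t := hq.toFinset) (f := fun i => (v.take i).foldl δ q)
    (by simpa using Nat.lt_succ_of_le hv) (fun i _ => by simp [reachableStates])
  simp only [Finset.mem_range] at ha hb
  rcases lt_or_gt_of_ne hne with h | h
  exacts [⟨a, b, h, by omega, heq⟩, ⟨b, a, h, by omega, heq.symm⟩]

lemma exists_foldl_take_mem_simpleCycles {q : Q} {v : List X} {a b : ℕ} (hab : a < b)
    (hb : b ≤ v.length) (heq : (v.take a).foldl δ q = (v.take b).foldl δ q) :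
    ∃ i, ∃ c ∈ simpleCycles δ, (v.take i).foldl δ q ∈ c := by
  classical
  -- The first revisit of an earlier prefix state closes a walk without repeated states.
  set f : ℕ → Q := fun i => (v.take i).foldl δ q
  have hex : ∃ b, ∃ a < b, f a = f b := ⟨b, a, hab, heq⟩
  have hlen : Nat.find hex ≤ v.length := (Nat.find_min' hex ⟨a, hab, heq⟩).trans hb
  obtain ⟨a₀, ha₀, heq₀⟩ := Nat.find_spec hex
  have hmin : ∀ i j, i < j → j < Nat.find hex → f i ≠ f j :=
    fun i j hij hj h => Nat.find_min hex hj ⟨i, hij, h⟩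
  obtain ⟨n, hn⟩ : ∃ n, Nat.find hex = a₀ + n + 1 := ⟨Nat.find hex - a₀ - 1, by omega⟩
  refine ⟨a₀, _, map_range_mem_simpleCycles (f := fun i => f (a₀ + i)) (n := n) ?_ ?_ ?_,
    List.mem_map.2 ⟨0, by simp, rfl⟩⟩
  · exact fun i hi => ⟨v[a₀ + i], (foldl_take_succ (by omega)).symm⟩
  · simp only [← add_assoc, ← hn, add_zero, heq₀]
  · intro i hi j hj hij
    simp only [Set.mem_Iic] at hi hj
    by_contra hne
    rcases lt_or_gt_of_ne hne with h | h
    exacts [hmin _ _ (by omega) (by omega) hij, hmin _ _ (by omega) (by omega) hij.symm]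

theorem isContracting_of_finite_simpleCycles (hreach : ∀ q, (reachableStates δ q).Finite)
    (hcyc : (simpleCycles δ).Finite) : IsContracting δ := by
  refine ⟨⋃ r ∈ ⋃ c ∈ simpleCycles δ, {r | r ∈ c}, reachableStates δ r,
    (hcyc.biUnion fun c _ => c.finite_toSet).biUnion fun r _ => hreach r,
    fun q => ⟨(hreach q).toFinset.card, fun v hv => ?_⟩⟩
  obtain ⟨a, b, hab, hb, heq⟩ := exists_lt_foldl_take_eq (hreach q) hv
  obtain ⟨i, c, hc, hi⟩ := exists_foldl_take_mem_simpleCycles hab hb heq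
  simp only [Set.mem_iUnion]
  refine ⟨_, ⟨c, hc, hi⟩, v.drop i, ?_⟩
  dsimp only
  rw [← List.foldl_append, List.take_append_drop]

theorem isContracting_iff_finite_simpleCycles (hreach : ∀ q, (reachableStates δ q).Finite) :
    IsContracting δ ↔ (simpleCycles δ).Finite :=
  ⟨finite_simpleCycles_of_isContracting, isContracting_of_finite_simpleCycles hreach⟩

end Automaton

namespace SelfSimilar

variable {G X : Type*} [Group G] [MulAction G X] {resx : G → X → G}

lemma restrict_one
    (hcocycle : ∀ (g h : G) (x : X), resx (g * h) x = resx g (h • x) * resx h x) (x : X) :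
    resx 1 x = 1 := by
  have h := hcocycle 1 1 x
  rw [one_mul, one_smul] at h
  exact right_eq_mul.mp h

lemma restrict_mem_pow
    (hcocycle : ∀ (g h : G) (x : X), resx (g * h) x = resx g (h • x) * resx h x)
    {S : Set G} (hclosed : ∀ s ∈ S, ∀ x : X, resx s x ∈ S) (n : ℕ) :
    ∀ g ∈ S ^ n, ∀ x, resx g x ∈ S ^ n := by
  induction n with
  | zero =>
    rintro g rfl x
    exact restrict_one hcocycle x
  | succ n ih =>
    rw [pow_succ]
    rintro _ ⟨a, ha, s, hs, rfl⟩ x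
    rw [hcocycle]
    exact Set.mul_mem_mul (ih a ha _) (hclosed s hs x)

lemma exists_mem_pow_of_closure_eq_top {S : Set G} (hgen : Subgroup.closure S = ⊤)
    (hsymm : ∀ s ∈ S, s⁻¹ ∈ S) (g : G) : ∃ n, g ∈ S ^ n := by
  induction (hgen ▸ Subgroup.mem_top g : g ∈ Subgroup.closure S) using
    Subgroup.closure_induction with
  | mem s hs => exact ⟨1, by simpa using hs⟩
  | one => exact ⟨0, rfl⟩
  | mul a b _ _ ha hb =>
    obtain ⟨m, hm⟩ := ha
    obtain ⟨n, hn⟩ := hb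
    exact ⟨m + n, pow_add S m n ▸ Set.mul_mem_mul hm hn⟩
  | inv a _ ha =>
    obtain ⟨n, hn⟩ := ha
    have hinv : a⁻¹ ∈ S⁻¹ ^ n := by
      rw [inv_pow]
      exact Set.inv_mem_inv.2 hn
    exact ⟨n, Set.pow_subset_pow_left (fun s hs => by simpa using hsymm _ hs) hinv⟩

theorem finite_reachableStates
    (hcocycle : ∀ (g h : G) (x : X), resx (g * h) x = resx g (h • x) * resx h x)
    {S : Set G} (hSfin : S.Finite) (hgen : Subgroup.closure S = ⊤)
    (hsymm : ∀ s ∈ S, s⁻¹ ∈ S) (hclosed : ∀ s ∈ S, ∀ x : X, resx s x ∈ S) (g : G) :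
    (Automaton.reachableStates resx g).Finite := by
  obtain ⟨n, hn⟩ := exists_mem_pow_of_closure_eq_top hgen hsymm g
  exact (hSfin.pow n).subset
    (Automaton.reachableStates_subset (restrict_mem_pow hcocycle hclosed n) hn)

end SelfSimilar

theorem stmt11_general {G X : Type*} [Group G] [MulAction G X]
    (resx : G → X → G)
    (hcocycle : ∀ (g h : G) (x : X), resx (g * h) x = resx g (h • x) * resx h x)
    (S : Set G) (hSfin : S.Finite) (hgen : Subgroup.closure S = ⊤)
    (hsymm : ∀ s ∈ S, s⁻¹ ∈ S)
    (hclosed : ∀ s ∈ S, ∀ x : X, resx s x ∈ S) :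
    (∃ N : Set G, N.Finite ∧
        ∀ g : G, ∃ n : ℕ, ∀ v : List X, n ≤ v.length → v.foldl resx g ∈ N) ↔
      {c : List G | c ≠ [] ∧ c.Nodup ∧
        c.Chain' (fun a b => ∃ x : X, resx a x = b) ∧
        ∀ h : c ≠ [], ∃ x : X, resx (c.getLast h) x = c.head h}.Finite :=
  Automaton.isContracting_iff_finite_simpleCycles
    (SelfSimilar.finite_reachableStates hcocycle hSfin hgen hsymm hclosed)

/-- A group `G` generated by a finite invertible automaton (i.e. by a finite symmetric
self-similar set `S`, acting self-similarly on words over `X` with restriction `resx`)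
is contracting if and only if the complete automaton `A(G)` (states `G`, arrows
`g → g|_x`) contains only finitely many simple directed cycles. -/
theorem stmt11 {G X : Type*} [Group G] [Fintype X] [MulAction G X]
    (resx : G → X → G)
    (hcocycle : ∀ (g h : G) (x : X), resx (g * h) x = resx g (h • x) * resx h x)
    (S : Set G) (hSfin : S.Finite) (hgen : Subgroup.closure S = ⊤)
    (hsymm : ∀ s ∈ S, s⁻¹ ∈ S)
    (hclosed : ∀ s ∈ S, ∀ x : X, resx s x ∈ S) :
    (∃ N : Set G, N.Finite ∧
        ∀ g : G, ∃ n : ℕ, ∀ v : List X, n ≤ v.length → v.foldl resx g ∈ N) ↔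
      {c : List G | c ≠ [] ∧ c.Nodup ∧
        c.Chain' (fun a b => ∃ x : X, resx a x = b) ∧
        ∀ h : c ≠ [], ∃ x : X, resx (c.getLast h) x = c.head h}.Finite :=
  stmt11_general resx hcocycle S hSfin hgen hsymm hclosed
end

section
/- The Schreier graph of the Hanoi Towers group G_(k) acting on X^n (X = {1,…,k}, generators the states a_{(ij)}) is isomorphic to the Hanoi graph H_n^{(k)}: configurations of n disks on k pegs with edges given by legal single-disk moves, under the bijection sending x₁⋯x_n to the configuration where disk i lies on peg x_i. -/
/-- The states of the Hanoi Towers automaton `A_(k)`: the trivial state `none = e` and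
a state `a_{(ij)}` for each transposition `{i, j}` of the pegs (encoded with `i < j`). -/
def HanoiState (k : ℕ) := Option {p : Fin k × Fin k // p.1 < p.2}

/-- Transition function of `A_(k)`. -/
def htrans {k : ℕ} : HanoiState k → Fin k → HanoiState k
  | none, _ => none
  | some p, x => if x = p.val.1 ∨ x = p.val.2 then none else some p

/-- Output function of `A_(k)`. -/
def hout {k : ℕ} : HanoiState k → Fin k → Fin k
  | none, x => x
  | some p, x => if x = p.val.1 then p.val.2 else if x = p.val.2 then p.val.1 else x

/-- The action of a state of `A_(k)` on words of length `n` (configurations are encoded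
as functions `Fin n → Fin k`: the word `x₁⋯x_n` corresponds to `i ↦ x_i`). -/
def hactVec {k n : ℕ} (s : HanoiState k) (w : Fin n → Fin k) : Fin n → Fin k :=
  fun m => hout ((List.ofFn fun i : Fin n => w i).take m |>.foldl htrans s) (w m)

/-- The Schreier graph of `G_(k)` acting on `X^n`, with generators the states
`a_{(ij)}` of the Hanoi Towers automaton. -/
def hanoiSchreier (k n : ℕ) : SimpleGraph (Fin n → Fin k) where
  Adj u v := u ≠ v ∧ ∃ p : {p : Fin k × Fin k // p.1 < p.2},
    hactVec (some p) u = v ∨ hactVec (some p) v = u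
  symm := by
    constructor
    rintro u v ⟨h, p, h'⟩
    exact ⟨h.symm, p, h'.symm⟩
  loopless := by constructor; rintro u ⟨h, -⟩; exact h rfl

/-- The Hanoi graph `H_n^(k)`: vertices are the configurations of `n` disks on `k` pegs
(disk `d` lies on peg `c d`; the placement on each peg is determined by disk sizes),
and edges are legal single-disk moves: the moved disk `d` is topmost on its peg (no
smaller disk on the same peg) and smaller than every disk on the target peg. -/
def hanoiGraph (k n : ℕ) : SimpleGraph (Fin n → Fin k) where
  Adj c c' := ∃ d : Fin n, c d ≠ c' d ∧ (∀ d', d' ≠ d → c d' = c' d') ∧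
    (∀ d', c d' = c d → d ≤ d') ∧ (∀ d', c' d' = c' d → d ≤ d')
  symm := by
    constructor
    rintro c c' ⟨d, hne, hoth, hsrc, htgt⟩
    exact ⟨d, fun h => hne h.symm, fun d' hd' => (hoth d' hd').symm, htgt, hsrc⟩
  loopless := by constructor; rintro c ⟨d, hne, -⟩; exact hne rfl


/-!
The state `a_{(ij)}` reads a word from the left, fixing every letter other than `i` and `j`,
until it meets the first occurrence of `i` or `j`; it swaps that letter and becomes trivial.
As a configuration, the first letter in `{i, j}` is the smallest disk on pegs `i` and `j`,
so `a_{(ij)}` moves that disk to the other peg — the unique legal move between these two pegs.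
-/

open Equiv

section LegalMove

variable {α : Type*} {n : ℕ}

def IsLegalMove (u v : Fin n → α) (d : Fin n) : Prop :=
  u d ≠ v d ∧ (∀ j ≠ d, u j = v j) ∧ ∀ j < d, u j ≠ u d ∧ u j ≠ v d

lemma IsLegalMove.symm {u v : Fin n → α} {d : Fin n} (h : IsLegalMove u v d) :
    IsLegalMove v u d := by
  obtain ⟨hne, hrest, hbelow⟩ := h
  refine ⟨hne.symm, fun j hj => (hrest j hj).symm, fun j hj => ?_⟩
  rw [← hrest j hj.ne]
  exact (hbelow j hj).symm

variable [DecidableEq α]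

def swapFirst (a b : α) (w : Fin n → α) : Fin n → α := fun m =>
  if ∀ j < m, w j ≠ a ∧ w j ≠ b then swap a b (w m) else w m

lemma swapFirst_comm (a b : α) : swapFirst (n := n) a b = swapFirst b a := by
  funext w m
  simp only [swapFirst, swap_comm a b, and_comm]

lemma swapFirst_apply_ne {a b : α} {w : Fin n → α} {m : Fin n} (h : swapFirst a b w m ≠ w m) :
    (∀ j < m, w j ≠ a ∧ w j ≠ b) ∧ (w m = a ∨ w m = b) := by
  unfold swapFirst at h
  split_ifs at h with hfirst
  · refine ⟨hfirst, ?_⟩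
    by_contra hab
    push Not at hab
    exact h (swap_apply_of_ne_of_ne hab.1 hab.2)
  · exact absurd rfl h

lemma IsLegalMove.swapFirst_eq {u v : Fin n → α} {d : Fin n} (h : IsLegalMove u v d) :
    swapFirst (u d) (v d) u = v := by
  obtain ⟨hne, hrest, hbelow⟩ := h
  funext m
  rcases lt_trichotomy m d with hm | rfl | hm
  · have hfirst : ∀ j < m, u j ≠ u d ∧ u j ≠ v d := fun j hj => hbelow j (hj.trans hm)
    simp only [swapFirst, if_pos hfirst]
    rw [swap_apply_of_ne_of_ne (hbelow m hm).1 (hbelow m hm).2, hrest m hm.ne]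
  · simp only [swapFirst, if_pos hbelow, swap_apply_left]
  · have hblocked : ¬ ∀ j < m, u j ≠ u d ∧ u j ≠ v d := fun h => (h d hm).1 rfl
    simp only [swapFirst, if_neg hblocked]
    exact hrest m hm.ne'

lemma exists_isLegalMove_of_swapFirst_eq {a b : α} {u v : Fin n → α} (h : swapFirst a b u = v)
    (huv : u ≠ v) : ∃ d, IsLegalMove u v d := by
  have hdiff : ∀ m, u m ≠ v m → (∀ j < m, u j ≠ a ∧ u j ≠ b) ∧ (u m = a ∨ u m = b) :=
    fun m hm => swapFirst_apply_ne (h ▸ hm.symm)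
  obtain ⟨d, hd⟩ := Function.ne_iff.mp huv
  obtain ⟨hfirst, hpeg⟩ := hdiff d hd
  have hvd : v d = a ∨ v d = b := by
    rw [← h, swapFirst, if_pos hfirst]
    rcases hpeg with hpeg | hpeg <;> simp [hpeg]
  -- Two differing positions would each have to precede the other's first letter in `{a, b}`.
  have hrest : ∀ j ≠ d, u j = v j := by
    intro j hj
    by_contra hj'
    obtain ⟨hfirst', hpeg'⟩ := hdiff j hj'
    rcases lt_or_gt_of_ne hj with hlt | hgt
    · exact not_or.mpr (hfirst j hlt) hpeg'
    · exact not_or.mpr (hfirst' d hgt) hpeg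
  refine ⟨d, hd, hrest, fun j hj => ⟨?_, ?_⟩⟩
  · rcases hpeg with hpeg | hpeg <;> rw [hpeg] <;> simp [hfirst j hj]
  · rcases hvd with hvd | hvd <;> rw [hvd] <;> simp [hfirst j hj]

end LegalMove

lemma foldl_htrans_none {k : ℕ} (l : List (Fin k)) : l.foldl htrans none = none := by
  induction l with
  | nil => rfl
  | cons _ _ ih => exact ih

lemma foldl_htrans_some {k : ℕ} (p : {p : Fin k × Fin k // p.1 < p.2}) (l : List (Fin k)) :
    l.foldl htrans (some p : HanoiState k) =
      if ∀ x ∈ l, x ≠ p.1.1 ∧ x ≠ p.1.2 then some p else none := by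
  induction l with
  | nil => exact (if_pos (List.forall_mem_nil _)).symm
  | cons a l ih =>
    show l.foldl htrans (htrans (some p) a) = _
    by_cases ha : a = p.1.1 ∨ a = p.1.2
    · have hstep : htrans (some p) a = none := if_pos ha
      have hfail : ¬ ∀ x ∈ a :: l, x ≠ p.1.1 ∧ x ≠ p.1.2 := fun h => not_or.mpr (h a (by simp)) ha
      rw [hstep, foldl_htrans_none]
      exact (if_neg hfail).symm
    · have hstep : htrans (some p) a = some p := if_neg ha
      rw [hstep, ih]
      exact if_congr (by simp [not_or.mp ha]) rfl rfl

lemma forall_mem_take_ofFn {α : Type*} {n : ℕ} (w : Fin n → α) (m : ℕ) (P : α → Prop) :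
    (∀ x ∈ (List.ofFn w).take m, P x) ↔ ∀ j : Fin n, (j : ℕ) < m → P (w j) := by
  simp only [List.mem_take_iff_getElem, List.getElem_ofFn, List.length_ofFn, lt_inf_iff,
    forall_exists_index, forall_and_index]
  grind

lemma hout_some {k : ℕ} (p : {p : Fin k × Fin k // p.1 < p.2}) (x : Fin k) :
    hout (some p) x = swap p.1.1 p.1.2 x :=
  (swap_apply_def _ _ _).symm

lemma hactVec_some {k n : ℕ} (p : {p : Fin k × Fin k // p.1 < p.2}) :
    hactVec (n := n) (some p) = swapFirst p.1.1 p.1.2 := by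
  funext w m
  unfold hactVec
  simp only [foldl_htrans_some, forall_mem_take_ofFn, Fin.val_fin_lt, swapFirst]
  split_ifs
  · exact hout_some p (w m)
  · rfl

lemma hanoiGraph_adj_iff {k n : ℕ} {u v : Fin n → Fin k} :
    (hanoiGraph k n).Adj u v ↔ ∃ d, IsLegalMove u v d := by
  refine exists_congr fun d => and_congr_right fun _ => and_congr_right fun hrest => ?_
  have htop : ∀ c : Fin n → Fin k, (∀ j, c j = c d → d ≤ j) ↔ ∀ j < d, c j ≠ c d :=
    fun c => forall_congr' fun j => by rw [← not_lt, imp_not_comm]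
  rw [htop, htop, ← forall₂_and]
  refine forall₂_congr fun j hj => and_congr_right fun _ => ?_
  rw [hrest j hj.ne]

/-- The Schreier graph of the Hanoi Towers group `G_(k)` acting on `X^n` is isomorphic
to the Hanoi graph `H_n^(k)` under the bijection sending the word `x₁⋯x_n` to the
configuration in which disk `i` lies on peg `x_i` (with our encoding of both vertex
sets as `Fin n → Fin k`, this bijection is the identity). -/
theorem stmt15 (k n : ℕ) : hanoiSchreier k n = hanoiGraph k n := by
  ext u v
  simp only [hanoiSchreier, hactVec_some, hanoiGraph_adj_iff]
  constructor
  · rintro ⟨huv, p, h | h⟩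
    · exact exists_isLegalMove_of_swapFirst_eq h huv
    · exact (exists_isLegalMove_of_swapFirst_eq h huv.symm).imp fun _ => IsLegalMove.symm
  · rintro ⟨d, hmove⟩
    refine ⟨fun h => hmove.1 (congrFun h d), ?_⟩
    rcases lt_or_gt_of_ne hmove.1 with hlt | hgt
    · exact ⟨⟨(u d, v d), hlt⟩, Or.inl hmove.swapFirst_eq⟩
    · exact ⟨⟨(v d, u d), hgt⟩, Or.inl (swapFirst_comm (u d) (v d) ▸ hmove.swapFirst_eq)⟩
end

section
/- Every state of the automaton A_v from the ω-periodic graph construction acts on infinite binary sequences by: a_k(x_k^{n_k} x̄_k ⋯ x_1^{n_1} x̄_1 w) = x_k^{n_k} x̄_k ⋯ x_1^{n_1} x̄_1 a(w) for all w ∈ {0,1}^ω and n_i ∈ ℕ ∪ {0}, where a is the adding machine; in particular each a_k preserves the orbits of the adding machine a on {0,1}^ω. -/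
/-- Prepending a letter to an infinite word. -/
def consInf {X : Type*} (x : X) (w : ℕ → X) : ℕ → X :=
  fun n => match n with
  | 0 => x
  | n + 1 => w n

/-- Appending an infinite word to a finite word. -/
def appendInf {X : Type*} (v : List X) (w : ℕ → X) : ℕ → X :=
  fun n => if h : n < v.length then v.get ⟨n, h⟩ else w (n - v.length)

/-- The finite prefix `x_k^{n_k} x̄_k ⋯ x_1^{n_1} x̄_1` (for `v = x₁⋯x_k` and exponents
`nn j`, `1 ≤ j ≤ k`). -/
def omegaPrefix (k : ℕ) (x : ℕ → Bool) (nn : ℕ → ℕ) : List Bool :=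
  ((List.range k).map fun i =>
    List.replicate (nn (k - i)) (x (k - i)) ++ [!(x (k - i))]).flatten

lemma appendInf_nil {X : Type*} (w : ℕ → X) : appendInf ([] : List X) w = w := by
  funext n; simp [appendInf]

lemma appendInf_cons {X : Type*} (b : X) (u : List X) (w : ℕ → X) :
    appendInf (b :: u) w = consInf b (appendInf u w) := by
  funext n
  cases n with
  | zero => simp [appendInf, consInf]
  | succ n =>
    simp only [appendInf, consInf, List.length_cons]
    by_cases h : n < u.length
    · rw [dif_pos (by omega), dif_pos h]
      simp
    · rw [dif_neg (by omega), dif_neg h]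
      congr 1
      omega

lemma appendInf_append {X : Type*} (u v : List X) (w : ℕ → X) :
    appendInf (u ++ v) w = appendInf u (appendInf v w) := by
  induction u with
  | nil => simp [appendInf_nil]
  | cons b u ih => simp [appendInf_cons, ih]

lemma consInf_eq_self {X : Type*} (t : ℕ → X) (c : X) (h : ∀ n, t n = c) :
    consInf c t = t := by
  funext n; cases n with
  | zero => simp [consInf, h]
  | succ n => simp [consInf, h]

lemma decompInf (t : ℕ → Bool) (c : Bool) (n : ℕ) (hn : t n = !c)
    (hlt : ∀ i < n, t i = c) :
    t = appendInf (List.replicate n c ++ [!c]) (fun i => t (n + 1 + i)) := by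
  have hlen : (List.replicate n c ++ [!c]).length = n + 1 := by simp
  funext m
  simp only [appendInf, hlen]
  by_cases h : m < n + 1
  · rw [dif_pos h]
    rcases Nat.lt_or_ge m n with hm | hm
    · rw [List.get_eq_getElem, List.getElem_append_left (by simpa using hm),
        List.getElem_replicate]
      exact hlt m hm
    · have hmn : m = n := by omega
      rw [List.get_eq_getElem, List.getElem_append_right (by simp [hmn])]
      simp only [List.length_replicate, hmn, Nat.sub_self, List.getElem_cons_zero]
      exact hn
  · rw [dif_neg h]
    congr 1
    omega

lemma omegaPrefix_succ (k : ℕ) (x : ℕ → Bool) (nn : ℕ → ℕ) :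
    omegaPrefix (k + 1) x nn
      = (List.replicate (nn (k + 1)) (x (k + 1)) ++ [!(x (k + 1))])
        ++ omegaPrefix k x nn := by
  unfold omegaPrefix
  rw [List.range_succ_eq_map]
  simp [Function.comp_def]

/-- Every state `a_k` of the automaton `A_v` (for `v = x₁⋯x_k ∈ {0,1}^*`) acts on
infinite binary sequences by
`a_k(x_k^{n_k} x̄_k ⋯ x_1^{n_1} x̄_1 w) = x_k^{n_k} x̄_k ⋯ x_1^{n_1} x̄_1 a(w)`
for all `w ∈ {0,1}^ω` and `n_i ∈ ℕ ∪ {0}`, where `a = a_0` is the adding machine; in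
particular each `a_k` preserves the orbits of the adding machine on `{0,1}^ω`. -/
theorem stmt19 (k : ℕ) (x : ℕ → Bool)
    (a : ℕ → (ℕ → Bool) → (ℕ → Bool))
    (h0f : ∀ w, a 0 (consInf false w) = consInf true w)
    (h0t : ∀ w, a 0 (consInf true w) = consInf false (a 0 w))
    (hloop : ∀ j, 1 ≤ j → j ≤ k →
      ∀ w, a j (consInf (x j) w) = consInf (x j) (a j w))
    (hdown : ∀ j, 1 ≤ j → j ≤ k →
      ∀ w, a j (consInf (!(x j)) w) = consInf (!(x j)) (a (j - 1) w)) :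
    (∀ (nn : ℕ → ℕ) (w : ℕ → Bool),
      a k (appendInf (omegaPrefix k x nn) w)
        = appendInf (omegaPrefix k x nn) (a 0 w)) ∧
    ∀ w : ℕ → Bool, ∃ m : ℕ, a k w = (a 0)^[m] w := by
  -- peeling replicate prefixes
  have hrep : ∀ j, 1 ≤ j → j ≤ k → ∀ (n : ℕ) (t : ℕ → Bool),
      a j (appendInf (List.replicate n (x j)) t)
        = appendInf (List.replicate n (x j)) (a j t) := by
    intro j h1 h2 n
    induction n with
    | zero => intro t; simp [appendInf_nil]
    | succ n ih =>
      intro t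
      rw [List.replicate_succ, appendInf_cons, hloop j h1 h2, ih, appendInf_cons]
  -- peeling one block
  have hblock : ∀ j, 1 ≤ j → j ≤ k → ∀ (n : ℕ) (t : ℕ → Bool),
      a j (appendInf (List.replicate n (x j) ++ [!(x j)]) t)
        = appendInf (List.replicate n (x j) ++ [!(x j)]) (a (j - 1) t) := by
    intro j h1 h2 n t
    rw [appendInf_append, hrep j h1 h2,
      show appendInf [!(x j)] t = consInf (!(x j)) (appendInf [] t) from appendInf_cons _ _ _,
      appendInf_nil, hdown j h1 h2, appendInf_append,
      show appendInf [!(x j)] (a (j-1) t) = consInf (!(x j)) (appendInf [] (a (j-1) t)) from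
        appendInf_cons _ _ _, appendInf_nil]
  -- main prefix lemma
  have hmain : ∀ j, j ≤ k → ∀ (nn : ℕ → ℕ) (w : ℕ → Bool),
      a j (appendInf (omegaPrefix j x nn) w)
        = appendInf (omegaPrefix j x nn) (a 0 w) := by
    intro j
    induction j with
    | zero =>
      intro _ nn w
      simp [omegaPrefix, appendInf_nil]
    | succ j ih =>
      intro hjk nn w
      rw [omegaPrefix_succ, appendInf_append, appendInf_append]
      have := hblock (j + 1) (by omega) hjk (nn (j + 1))
        (appendInf (omegaPrefix j x nn) w)
      rw [appendInf_append] at this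
      rw [this]
      simp only [Nat.add_sub_cancel]
      rw [ih (by omega) nn w]; simp only [appendInf_append]
  -- fixed point on constant tails
  have hfix : ∀ j, 1 ≤ j → j ≤ k → ∀ t : ℕ → Bool, (∀ n, t n = x j) → a j t = t := by
    intro j h1 h2 t ht
    have key : a j t = consInf (x j) (a j t) := by
      conv_lhs => rw [← consInf_eq_self t (x j) ht]
      exact hloop j h1 h2 t
    have hval : ∀ n, (a j t) n = x j := by
      intro n
      induction n with
      | zero => rw [key]; rfl
      | succ n ihn => rw [key]; exact ihn
    funext n
    rw [hval n, ht n]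
  -- decomposition of any word
  have P : ∀ j, j ≤ k → ∀ t : ℕ → Bool,
      (∃ u : List Bool, ∃ t', t = appendInf u t' ∧ a j t = appendInf u (a 0 t')) ∨
      a j t = t := by
    intro j
    induction j with
    | zero =>
      intro _ t
      exact Or.inl ⟨[], t, (appendInf_nil t).symm, by rw [appendInf_nil]⟩
    | succ j ih =>
      intro hjk t
      by_cases hc : ∃ n, t n = !(x (j + 1))
      · set n := Nat.find hc with hndef
        have hn : t n = !(x (j + 1)) := Nat.find_spec hc
        have hlt : ∀ i < n, t i = x (j + 1) := by
          intro i hi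
          have := Nat.find_min hc hi
          cases hb : t i <;> cases hx : x (j + 1) <;> simp_all
        set t₂ : ℕ → Bool := fun i => t (n + 1 + i) with ht2def
        have hdec : t = appendInf (List.replicate n (x (j + 1)) ++ [!(x (j + 1))]) t₂ :=
          decompInf t (x (j + 1)) n hn hlt
        have hact : a (j + 1) t
            = appendInf (List.replicate n (x (j + 1)) ++ [!(x (j + 1))]) (a j t₂) := by
          conv_lhs => rw [hdec]
          rw [hblock (j + 1) (by omega) hjk]
          simp
        rcases ih (by omega) t₂ with ⟨u, t', ht', ha⟩ | hfx
        · refine Or.inl ⟨(List.replicate n (x (j + 1)) ++ [!(x (j + 1))]) ++ u, t', ?_, ?_⟩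
          · rw [appendInf_append, ← ht', ← hdec]
          · rw [appendInf_append, ← ha, hact]
        · refine Or.inr ?_
          rw [hact, hfx, ← hdec]
      · push_neg at hc
        refine Or.inr (hfix (j + 1) (by omega) hjk t ?_)
        intro m
        have := hc m
        cases hb : t m <;> cases hx : x (j + 1) <;> simp_all
  -- adding machine iterate lemmas
  have h2 : ∀ (b : Bool) (w : ℕ → Bool), a 0 (a 0 (consInf b w)) = consInf b (a 0 w) := by
    intro b w
    cases b
    · rw [h0f, h0t]
    · rw [h0t, h0f]
  have hit2 : ∀ (m : ℕ) (b : Bool) (w : ℕ → Bool),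
      (a 0)^[2 * m] (consInf b w) = consInf b ((a 0)^[m] w) := by
    intro m
    induction m with
    | zero => intro b w; simp
    | succ m ihm =>
      intro b w
      have : 2 * (m + 1) = 2 * m + 2 := by ring
      rw [this, Function.iterate_add_apply]
      have h22 : (a 0)^[2] (consInf b w) = consInf b (a 0 w) := by
        simp only [Function.iterate_succ, Function.iterate_zero, Function.comp_apply, id_eq]
        exact h2 b w
      rw [h22, ihm, ← Function.iterate_succ_apply]
  have hiter : ∀ (u : List Bool) (w : ℕ → Bool),
      (a 0)^[2 ^ u.length] (appendInf u w) = appendInf u (a 0 w) := by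
    intro u
    induction u with
    | nil => intro w; simp [appendInf_nil]
    | cons b u ihu =>
      intro w
      rw [appendInf_cons, List.length_cons, pow_succ, mul_comm, hit2, ihu, appendInf_cons]
  refine ⟨hmain k le_rfl, ?_⟩
  intro w
  rcases P k le_rfl w with ⟨u, t', ht', ha⟩ | hfx
  · refine ⟨2 ^ u.length, ?_⟩
    rw [ha, ht', hiter]
  · exact ⟨0, by simpa using hfx⟩
end
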